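/- arXiv:1312.3349 — 4 statements merged into one kernel-verified Lean document; each statement's English description precedes it below -/
import Mathlib

section
/- For fixed t ∈ (0,T), as β → ∞ the trajectory x_β(t) = X₀·B·sinh(k(T−t)+A)/sinh(kT+2A) + X_T·B·sinh(kt)/sinh(kT+2A), where A = log(√((β+k)/(β−k))), B = k/√λ, and k = k(β) satisfies k² = λβ²/(λ+β²) with λ > 0, converges to the Almgren–Chriss solution X₀·sinh(√λ(T−t))/sinh(√λ T) + X_T·sinh(√λ t)/sinh(√λ T). -/
/-! As β → ∞ the rate k(β) tends to √λ, so k/β → 0 and the boundary shift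
A = log √((1 + k/β)/(1 - k/β)) tends to 0, while B = k/√λ tends to 1. Since sinh (√λ T) ≠ 0,
the trajectory is continuous in (k, A, B) at (√λ, 0, 1), which gives the Almgren–Chriss limit. -/

open Filter Topology Real

theorem tendsto_sqrt_mul_sq_div_add_sq (lam : ℝ) :
    Tendsto (fun β : ℝ => √(lam * β ^ 2 / (lam + β ^ 2))) atTop (𝓝 √lam) := by
  have hquot : Tendsto (fun β : ℝ => lam / (lam / β ^ 2 + 1)) atTop (𝓝 lam) := by
    have h : Tendsto (fun β : ℝ => lam / β ^ 2 + 1) atTop (𝓝 1) := by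
      simpa using (tendsto_const_nhds.div_atTop
        (tendsto_pow_atTop (α := ℝ) two_ne_zero)).add_const 1
    simpa [Pi.div_def] using tendsto_const_nhds.div h one_ne_zero
  refine (continuous_sqrt.tendsto lam).comp (hquot.congr' ?_)
  filter_upwards [eventually_ne_atTop 0] with β hβ
  field_simp

theorem tendsto_log_sqrt_add_div_sub {k : ℝ → ℝ} {c : ℝ} (hk : Tendsto k atTop (𝓝 c)) :
    Tendsto (fun β => log √((β + k β) / (β - k β))) atTop (𝓝 0) := by
  have hratio : Tendsto (fun β => k β / β) atTop (𝓝 0) := by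
    simpa [div_eq_mul_inv] using hk.mul tendsto_inv_atTop_zero
  have hcont : ContinuousAt (fun u : ℝ => log √((1 + u) / (1 - u))) 0 := by
    fun_prop (disch := norm_num)
  have h := hcont.tendsto.comp hratio
  simp only [add_zero, sub_zero, div_one, sqrt_one, log_one] at h
  refine h.congr' ?_
  filter_upwards [eventually_ne_atTop 0] with β hβ
  simp only [Function.comp_apply]
  rw [one_add_div hβ, one_sub_div hβ, div_div_div_cancel_right₀ hβ]

theorem tendsto_sinh_mul_add {k A : ℝ → ℝ} {s : ℝ} (hk : Tendsto k atTop (𝓝 s))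
    (hA : Tendsto A atTop (𝓝 0)) (c : ℝ) :
    Tendsto (fun β => sinh (k β * c + A β)) atTop (𝓝 (sinh (s * c))) := by
  simpa [Function.comp_def] using (continuous_sinh.tendsto _).comp ((hk.mul_const c).add hA)

theorem stmt1_general (X₀ X_T T t lam : ℝ) (hlam : 0 < lam) (hT : 0 < T) :
    Filter.Tendsto (fun β : ℝ =>
      let k := Real.sqrt (lam * β ^ 2 / (lam + β ^ 2));
      let A := Real.log (Real.sqrt ((β + k) / (β - k)));
      let B := k / Real.sqrt lam;
      X₀ * B * Real.sinh (k * (T - t) + A) / Real.sinh (k * T + 2 * A)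
        + X_T * B * Real.sinh (k * t) / Real.sinh (k * T + 2 * A))
      Filter.atTop
      (nhds (X₀ * Real.sinh (Real.sqrt lam * (T - t)) / Real.sinh (Real.sqrt lam * T)
        + X_T * Real.sinh (Real.sqrt lam * t) / Real.sinh (Real.sqrt lam * T))) := by
  have hs : 0 < √lam := sqrt_pos.mpr hlam
  have hk := tendsto_sqrt_mul_sq_div_add_sq lam
  have hA := tendsto_log_sqrt_add_div_sub hk
  have hB : Tendsto (fun β => √(lam * β ^ 2 / (lam + β ^ 2)) / √lam) atTop (𝓝 1) := by
    simpa [hs.ne'] using hk.div_const √lam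
  have hden : sinh (√lam * T) ≠ 0 := (sinh_pos_iff.mpr (by positivity)).ne'
  have hsinhT := tendsto_sinh_mul_add hk (by simpa using hA.const_mul 2) T
  have hsinhTt := tendsto_sinh_mul_add hk hA (T - t)
  have hsinht := (continuous_sinh.tendsto _).comp (hk.mul_const t)
  simpa using ((tendsto_const_nhds.mul hB).mul hsinhTt).div hsinhT hden |>.add
    (((tendsto_const_nhds.mul hB).mul hsinht).div hsinhT hden)

theorem stmt1 (X₀ X_T T t lam : ℝ) (hlam : 0 < lam) (hT : 0 < T)
    (ht : t ∈ Set.Ioo 0 T) :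
    Filter.Tendsto (fun β : ℝ =>
      let k := Real.sqrt (lam * β ^ 2 / (lam + β ^ 2));
      let A := Real.log (Real.sqrt ((β + k) / (β - k)));
      let B := k / Real.sqrt lam;
      X₀ * B * Real.sinh (k * (T - t) + A) / Real.sinh (k * T + 2 * A)
        + X_T * B * Real.sinh (k * t) / Real.sinh (k * T + 2 * A))
      Filter.atTop
      (nhds (X₀ * Real.sinh (Real.sqrt lam * (T - t)) / Real.sinh (Real.sqrt lam * T)
        + X_T * Real.sinh (Real.sqrt lam * t) / Real.sinh (Real.sqrt lam * T))) :=
  stmt1_general X₀ X_T T t lam hlam hT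
end

section
/- Let K : [0,∞) → ℝ be continuous, nonnegative, nonincreasing, and convex. Then for any finite set of trade times t₁ < t₂ < … < t_N and trade sizes q₁,…,q_N ∈ ℝ, the quadratic form ∑_{i=1}^N ∑_{j=1}^N q_i q_j K(|t_i − t_j|) is nonnegative. -/
/-!
Only the values of `K` at the finitely many distances `|tᵢ - tⱼ|` enter the quadratic form, so
`K` may be replaced by its piecewise-linear interpolant at those distances. That interpolant is a
nonnegative combination of the constant `1` and of hinges `x ↦ (a - x)⁺`, the weights being the
jumps of slope (nonnegative by convexity and monotonicity). Each hinge evaluated at `|x - y|` is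
the autocorrelation `∫ 1[x, x+a) 1[y, y+a)` of an indicator, hence a positive semidefinite
kernel, and so is `1`.
-/

open MeasureTheory Finset

def hinge (a x : ℝ) : ℝ := max 0 (a - x)

lemma hinge_of_le {a x : ℝ} (h : x ≤ a) : hinge a x = a - x :=
  max_eq_right (sub_nonneg.2 h)

lemma hinge_of_ge {a x : ℝ} (h : a ≤ x) : hinge a x = 0 :=
  max_eq_left (sub_nonpos.2 h)

lemma volume_real_Ico_inter_Ico (x y a : ℝ) :
    volume.real (Set.Ico x (x + a) ∩ Set.Ico y (y + a)) = hinge a |x - y| := by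
  rw [Set.Ico_inter_Ico, Real.volume_real_Ico, hinge, max_comm]
  congr 1
  rcases le_total x y with h | h
  · rw [abs_of_nonpos (by linarith), inf_eq_left.2 (by linarith), sup_eq_right.2 h]; ring
  · rw [abs_of_nonneg (by linarith), inf_eq_right.2 (by linarith), sup_eq_left.2 h]; ring

def psdKernelCone : PointedCone ℝ (ℝ → ℝ) where
  carrier := {φ | ∀ (N : ℕ) (t q : Fin N → ℝ), 0 ≤ ∑ i, ∑ j, q i * q j * φ |t i - t j|}
  zero_mem' _ _ _ := by simp
  add_mem' {φ ψ} hφ hψ N t q := by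
    simpa only [Pi.add_apply, mul_add, sum_add_distrib] using add_nonneg (hφ N t q) (hψ N t q)
  smul_mem' c φ hφ N t q := by
    have : ∑ i, ∑ j, q i * q j * (c • φ) |t i - t j|
        = c * ∑ i, ∑ j, q i * q j * φ |t i - t j| := by
      simp only [← Nonneg.coe_smul, Pi.smul_apply, smul_eq_mul, mul_sum]
      exact sum_congr rfl fun i _ => sum_congr rfl fun j _ => by ring
    exact this ▸ mul_nonneg c.2 (hφ N t q)

lemma one_mem_psdKernelCone : (1 : ℝ → ℝ) ∈ psdKernelCone := by
  intro N t q
  simpa [sq, sum_mul_sum] using sq_nonneg (∑ i, q i)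

/-- The triangle `hinge a |x|` is the autocorrelation of the indicator of `[0, a)`. -/
lemma hinge_mem_psdKernelCone (a : ℝ) : hinge a ∈ psdKernelCone := by
  intro N t q
  let g i := (Set.Ico (t i) (t i + a)).indicator fun _ => q i
  have hprod i j : (fun x => g i x * g j x) =
      (Set.Ico (t i) (t i + a) ∩ Set.Ico (t j) (t j + a)).indicator fun _ => q i * q j :=
    funext fun x => (Set.inter_indicator_mul _ _ x).symm
  have hint i j : Integrable (fun x => g i x * g j x) := by
    rw [hprod, integrable_indicator_iff (measurableSet_Ico.inter measurableSet_Ico)]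
    exact integrableOn_const ((measure_mono Set.inter_subset_left).trans_lt (by simp)).ne
  have hcorr i j : ∫ x, g i x * g j x = q i * q j * hinge a |t i - t j| := by
    rw [hprod, integral_indicator_const _ (measurableSet_Ico.inter measurableSet_Ico),
      volume_real_Ico_inter_Ico, smul_eq_mul, mul_comm]
  calc 0 ≤ ∫ x, (∑ i, g i x) ^ 2 := integral_nonneg fun x => sq_nonneg _
    _ = ∑ i, ∑ j, ∫ x, g i x * g j x := by
      simp_rw [sq, sum_mul_sum]
      rw [integral_finsetSum _ fun i _ => integrable_finsetSum _ fun j _ => hint i j]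
      exact sum_congr rfl fun i _ => integral_finsetSum _ fun j _ => hint i j
    _ = _ := by simp_rw [hcorr]

def hingeCone : PointedCone ℝ (ℝ → ℝ) := PointedCone.hull ℝ (insert 1 (Set.range hinge))

lemma hingeCone_le_psdKernelCone : hingeCone ≤ psdKernelCone := by
  refine Submodule.span_le.2 (Set.insert_subset_iff.2 ⟨one_mem_psdKernelCone, ?_⟩)
  rintro _ ⟨a, rfl⟩
  exact hinge_mem_psdKernelCone a

lemma ConvexOn.secant_le_of_lt_of_lt {s : Set ℝ} {f : ℝ → ℝ} (hf : ConvexOn ℝ s f)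
    {x y z α σ : ℝ} (hx : x ∈ s) (hz : z ∈ s) (hxy : x < y) (hyz : y < z)
    (hfy : f y = α + σ * y) (hfz : f z = α + σ * z) : α + σ * x ≤ f x := by
  have hslope := hf.slope_mono_adjacent hx hz hxy hyz
  rw [hfy, hfz, show α + σ * z - (α + σ * y) = σ * (z - y) by ring,
    mul_div_cancel_right₀ _ (sub_pos.2 hyz).ne', div_le_iff₀ (sub_pos.2 hxy)] at hslope
  linarith

/-- Nodes are added from the left: below the smallest node the interpolant is affine and,
by convexity, stays below `K`, which makes the weight of the new hinge nonnegative. -/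
lemma exists_mem_hingeCone_eqOn_affine_le {K : ℝ → ℝ}
    (hnonneg : ∀ t ∈ Set.Ici (0 : ℝ), 0 ≤ K t) (hanti : AntitoneOn K (Set.Ici 0))
    (hconv : ConvexOn ℝ (Set.Ici 0) K) (D : Finset ℝ) (hD : ∀ d ∈ D, 0 ≤ d) :
    ∃ φ ∈ hingeCone, Set.EqOn φ K D ∧ ∃ α σ : ℝ, ∀ x ∈ lowerBounds (D : Set ℝ),
      φ x = α + σ * x ∧ (0 ≤ x → φ x ≤ K x) := by
  classical
  induction D using Finset.induction_on_min with
  | empty => exact ⟨0, zero_mem _, by simp, 0, 0, fun x _ => ⟨by simp, hnonneg x⟩⟩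
  | insert a s has ih =>
    have ha : 0 ≤ a := hD a (mem_insert_self a s)
    obtain ⟨φ, hφ, hφK, α, σ, hφα⟩ := ih fun d hd => hD d (mem_insert_of_mem hd)
    rcases s.eq_empty_or_nonempty with rfl | hs
    · refine ⟨K a • 1, ?_, by simp, K a, 0, fun x hx => ⟨by simp, fun hx0 => ?_⟩⟩
      · exact Submodule.smul_mem hingeCone (⟨K a, hnonneg a ha⟩ : {c : ℝ // 0 ≤ c})
          (PointedCone.subset_hull (Set.mem_insert 1 _))
      · simpa using hanti hx0 ha (hx (by simp))
    set m := s.min' hs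
    have ham : a < m := has m (s.min'_mem hs)
    have hm : m ∈ lowerBounds (s : Set ℝ) := fun d hd => s.min'_le d hd
    have has' : a ∈ lowerBounds (s : Set ℝ) := fun d hd => (has d hd).le
    set δ := (K a - φ a) / (m - a)
    have hδ : 0 ≤ δ := div_nonneg (sub_nonneg.2 ((hφα a has').2 ha)) (sub_pos.2 ham).le
    set ψ := φ + δ • hinge m
    have hψ : ψ ∈ hingeCone := add_mem hφ <|
      Submodule.smul_mem hingeCone (⟨δ, hδ⟩ : {c : ℝ // 0 ≤ c})
        (PointedCone.subset_hull (Set.mem_insert_of_mem 1 ⟨m, rfl⟩))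
    have hψK : Set.EqOn ψ K ↑(insert a s) := by
      intro d hd
      rcases mem_insert.1 hd with rfl | hd
      · simp only [ψ, Pi.add_apply, Pi.smul_apply, smul_eq_mul, hinge_of_le ham.le, δ]
        field_simp [(sub_pos.2 ham).ne']
        ring
      · simp [ψ, hinge_of_ge (hm hd), hφK hd]
    have hψα : ∀ x ∈ lowerBounds (s : Set ℝ), ψ x = α + δ * m + (σ - δ) * x := by
      intro x hx
      have hxm : x ≤ m := hx (s.min'_mem hs)
      simp only [ψ, Pi.add_apply, Pi.smul_apply, smul_eq_mul, hinge_of_le hxm, (hφα x hx).1]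
      ring
    refine ⟨ψ, hψ, hψK, α + δ * m, σ - δ, fun x hx => ?_⟩
    have hxs : x ∈ lowerBounds (s : Set ℝ) := fun d hd => hx (by simp [hd])
    refine ⟨hψα x hxs, fun hx0 => ?_⟩
    rcases (hx (mem_insert_self a s)).eq_or_lt with rfl | hxa
    · exact (hψK (mem_insert_self x s)).le
    · rw [hψα x hxs]
      refine hconv.secant_le_of_lt_of_lt hx0 (ha.trans ham.le) hxa ham ?_ ?_
      · rw [← hψK (mem_insert_self a s), hψα a has']
      · rw [← hψK (mem_insert_of_mem (s.min'_mem hs)), hψα m hm]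

theorem stmt8_general (K : ℝ → ℝ)
    (hnonneg : ∀ t ∈ Set.Ici (0 : ℝ), 0 ≤ K t)
    (hanti : AntitoneOn K (Set.Ici 0))
    (hconv : ConvexOn ℝ (Set.Ici 0) K)
    (N : ℕ) (t q : Fin N → ℝ) :
    0 ≤ ∑ i : Fin N, ∑ j : Fin N, q i * q j * K |t i - t j| := by
  classical
  let D := univ.image fun p : Fin N × Fin N => |t p.1 - t p.2|
  have hD i j : |t i - t j| ∈ D := mem_image_of_mem _ (mem_univ (i, j))
  obtain ⟨φ, hφ, hφK, -⟩ := exists_mem_hingeCone_eqOn_affine_le hnonneg hanti hconv D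
    (by simp only [D, mem_image]; rintro _ ⟨p, -, rfl⟩; exact abs_nonneg _)
  simp_rw [← fun i j => hφK (hD i j)]
  exact hingeCone_le_psdKernelCone hφ N t q

theorem stmt8 (K : ℝ → ℝ)
    (hcont : ContinuousOn K (Set.Ici 0))
    (hnonneg : ∀ t ∈ Set.Ici (0 : ℝ), 0 ≤ K t)
    (hanti : AntitoneOn K (Set.Ici 0))
    (hconv : ConvexOn ℝ (Set.Ici 0) K)
    (N : ℕ) (t q : Fin N → ℝ) (ht : StrictMono t) :
    0 ≤ ∑ i : Fin N, ∑ j : Fin N, q i * q j * K |t i - t j| :=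
  stmt8_general K hnonneg hanti hconv N t q
end

section
/- For α > 0, κ > 0, c > 0, define the trading rate q(t) = c·α·t^{α−1} + √κ·t^{α−1/2}·Γ(α+1)/Γ(α+1/2) for t > 0. Then the Laplace transform of q equals (cs + √(κs))·Γ(α+1)/s^{α+1} for every s > 0; equivalently, q(t) solves the convolution equation ∫₀^t q(τ)·K(t−τ) dτ = t^α where K has Laplace transform 1/(cs+√(κs)). -/
/-! Both terms of `q` are multiples of powers `t ^ β` with `β > -1`, whose Laplace transform is
`Γ(β + 1) / s ^ (β + 1)`. With `α Γ(α) = Γ(α + 1)` the two transforms become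
`c s Γ(α + 1) / s ^ (α + 1)` and `√κ √s Γ(α + 1) / s ^ (α + 1)`; the factor `Γ(α + 1/2)` in `q` is
chosen precisely to cancel the one produced by the transform of `t ^ (α - 1/2)`. -/

open MeasureTheory Set Real

lemma integrableOn_exp_neg_mul_mul_rpow_Ioi {β s : ℝ} (hβ : -1 < β) (hs : 0 < s) :
    IntegrableOn (fun t : ℝ => exp (-s * t) * t ^ β) (Ioi 0) :=
  (integrableOn_rpow_mul_exp_neg_mul_rpow (p := 1) hβ one_pos hs).congr_fun
    (fun t _ => by simp only [rpow_one, mul_comm]) measurableSet_Ioi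

lemma integral_exp_neg_mul_mul_rpow_Ioi {β s : ℝ} (hβ : -1 < β) (hs : 0 < s) :
    ∫ t in Ioi (0 : ℝ), exp (-s * t) * t ^ β = Gamma (β + 1) / s ^ (β + 1) := by
  have h := integral_rpow_mul_exp_neg_mul_Ioi (a := β + 1) (by linarith) hs
  rw [add_sub_cancel_right] at h
  simp_rw [neg_mul, mul_comm (exp _), h, div_rpow zero_le_one hs.le, one_rpow, one_div,
    div_eq_inv_mul]

theorem stmt13_general (α κ c : ℝ) (hα : 0 < α)
    (q : ℝ → ℝ)
    (hq : ∀ t : ℝ, 0 < t → q t = c * α * t ^ (α - 1)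
      + Real.sqrt κ * t ^ (α - 1 / 2) * (Real.Gamma (α + 1) / Real.Gamma (α + 1 / 2))) :
    ∀ s : ℝ, 0 < s →
      (∫ t in Set.Ioi (0 : ℝ), Real.exp (-s * t) * q t)
        = (c * s + Real.sqrt (κ * s)) * Real.Gamma (α + 1) / s ^ (α + 1) := by
  intro s hs
  have hβ₁ : -1 < α - 1 := by linarith
  have hβ₂ : -1 < α - 1 / 2 := by linarith
  have hsα : s ^ α = s ^ (α + 1) / s := by
    rw [rpow_add_one hs.ne', mul_div_cancel_right₀ _ hs.ne']
  have hsα₂ : s ^ (α + 1 / 2) = s ^ (α + 1) / √s := by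
    rw [sqrt_eq_rpow, ← rpow_sub hs]; ring_nf
  calc ∫ t in Ioi (0 : ℝ), exp (-s * t) * q t
      = ∫ t in Ioi (0 : ℝ), c * α * (exp (-s * t) * t ^ (α - 1))
          + √κ * (Gamma (α + 1) / Gamma (α + 1 / 2)) * (exp (-s * t) * t ^ (α - 1 / 2)) :=
        setIntegral_congr_fun measurableSet_Ioi fun t ht => by rw [hq t ht]; ring
    _ = c * α * (Gamma α / s ^ α)
          + √κ * (Gamma (α + 1) / Gamma (α + 1 / 2)) * (Gamma (α + 1 / 2) / s ^ (α + 1 / 2)) := by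
        rw [integral_add ((integrableOn_exp_neg_mul_mul_rpow_Ioi hβ₁ hs).const_mul _)
            ((integrableOn_exp_neg_mul_mul_rpow_Ioi hβ₂ hs).const_mul _),
          integral_const_mul, integral_const_mul, integral_exp_neg_mul_mul_rpow_Ioi hβ₁ hs,
          integral_exp_neg_mul_mul_rpow_Ioi hβ₂ hs, sub_add_cancel,
          show α - 1 / 2 + 1 = α + 1 / 2 by ring]
    _ = (c * s + √(κ * s)) * Gamma (α + 1) / s ^ (α + 1) := by
        rw [Gamma_add_one hα.ne', sqrt_mul' κ hs.le, hsα, hsα₂]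
        field_simp

theorem stmt13 (α κ c : ℝ) (hα : 0 < α) (hκ : 0 < κ) (hc : 0 < c)
    (q : ℝ → ℝ)
    (hq : ∀ t : ℝ, 0 < t → q t = c * α * t ^ (α - 1)
      + Real.sqrt κ * t ^ (α - 1 / 2) * (Real.Gamma (α + 1) / Real.Gamma (α + 1 / 2))) :
    ∀ s : ℝ, 0 < s →
      (∫ t in Set.Ioi (0 : ℝ), Real.exp (-s * t) * q t)
        = (c * s + Real.sqrt (κ * s)) * Real.Gamma (α + 1) / s ^ (α + 1) :=
  stmt13_general α κ c hα q hq
end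

section
/- For the kernel K(t) = c⁻¹·exp(κt/c²)·erfc(√(κt/c²)) with c, κ > 0, the cumulative impact of a unit constant trading rate, h(T) = ∫₀^T K(t) dt, is strictly increasing, and h(T)/√T → 2/√(πκ) as T → ∞. -/
/-! With `a = κ / c²` the kernel is `K t = c⁻¹ · E(a t)`, where `E s = eˢ erfc √s`. Since
`d/ds erfc √s = -e⁻ˢ / √(π s)`, the function `E s + 2 √s / √π` is an antiderivative of `E`, so
`∫₀ˢ E = E S - 1 + 2 √S / √π`. As `0 < E ≤ 2` on `[0, ∞)`, this is `2 √S / √π + O(1)`, and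
rescaling gives `h T / √T → c⁻¹ a⁻¹ √a · 2 / √π = 2 / √(π κ)`. Monotonicity holds because
`K > 0`. -/

noncomputable def erfc (x : ℝ) : ℝ :=
  (2 / Real.sqrt Real.pi) * ∫ u in Set.Ioi x, Real.exp (-u ^ 2)

open Real MeasureTheory Set Filter Topology intervalIntegral

lemma integrable_exp_neg_sq : Integrable (fun u : ℝ => exp (-u ^ 2)) := by
  simpa using integrable_exp_neg_mul_sq one_pos

lemma continuous_exp_neg_sq : Continuous (fun u : ℝ => exp (-u ^ 2)) := by
  fun_prop

lemma erfc_sub_erfc (x y : ℝ) :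
    erfc x - erfc y = 2 / √π * ∫ u in x..y, exp (-u ^ 2) := by
  rw [erfc, erfc, ← mul_sub, integral_Ioi_sub_Ioi' integrable_exp_neg_sq.integrableOn
    integrable_exp_neg_sq.integrableOn]

lemma hasDerivAt_erfc (x : ℝ) : HasDerivAt erfc (-(2 / √π * exp (-x ^ 2))) x := by
  have hdiff : HasDerivAt (fun y => erfc x - 2 / √π * ∫ u in x..y, exp (-u ^ 2))
      (-(2 / √π * exp (-x ^ 2))) x := by
    simpa using ((continuous_exp_neg_sq.integral_hasStrictDerivAt x x).hasDerivAt.const_mul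
      (2 / √π)).const_sub (erfc x)
  exact hdiff.congr_of_eventuallyEq (.of_forall fun y => by linarith [erfc_sub_erfc x y])

lemma continuous_erfc : Continuous erfc :=
  continuous_iff_continuousAt.2 fun x => (hasDerivAt_erfc x).continuousAt

lemma erfc_pos (x : ℝ) : 0 < erfc x := by
  have hint : 0 < ∫ u in Ioi x, exp (-u ^ 2) := by
    rw [setIntegral_pos_iff_support_of_nonneg_ae (.of_forall fun u => (exp_pos _).le)
      integrable_exp_neg_sq.integrableOn, Function.support_eq_univ fun u => (exp_pos _).ne',
      univ_inter, volume_Ioi]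
    exact ENNReal.zero_lt_top
  unfold erfc
  positivity

lemma erfc_zero : erfc 0 = 1 := by
  have hhalf : ∫ u in Ioi (0 : ℝ), exp (-u ^ 2) = √π / 2 := by
    simpa using integral_gaussian_Ioi 1
  have hπ : 0 < √π := sqrt_pos.2 pi_pos
  rw [erfc, hhalf]
  field_simp

lemma erfc_le_two_mul_exp_neg_sq {x : ℝ} (hx : 0 ≤ x) : erfc x ≤ 2 * exp (-x ^ 2) := by
  -- For `u ≥ x ≥ 0`, `u² ≥ x² + (u - x)²`, which factors `exp (-x²)` out of the tail.
  have htail : ∫ u in Ioi x, exp (-u ^ 2) ≤ exp (-x ^ 2) * √π :=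
    calc ∫ u in Ioi x, exp (-u ^ 2)
        ≤ ∫ u in Ioi x, exp (-x ^ 2) * exp (-(u - x) ^ 2) := by
          refine setIntegral_mono_on integrable_exp_neg_sq.integrableOn
            ((integrable_exp_neg_sq.comp_sub_right x).const_mul _).integrableOn
            measurableSet_Ioi fun u hu => ?_
          rw [← exp_add, exp_le_exp]
          nlinarith [mem_Ioi.mp hu]
      _ ≤ exp (-x ^ 2) * ∫ u, exp (-(u - x) ^ 2) := by
          rw [MeasureTheory.integral_const_mul]
          exact mul_le_mul_of_nonneg_left (setIntegral_le_integral
            (integrable_exp_neg_sq.comp_sub_right x) (.of_forall fun u => (exp_pos _).le))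
            (exp_pos _).le
      _ = exp (-x ^ 2) * √π := by
          rw [integral_sub_right_eq_self (fun u => exp (-u ^ 2)) x]
          simpa using integral_gaussian 1
  have hπ : 0 < √π := sqrt_pos.2 pi_pos
  calc erfc x ≤ 2 / √π * (exp (-x ^ 2) * √π) := by
        rw [erfc]; gcongr
    _ = 2 * exp (-x ^ 2) := by field_simp

/-- `erfcx √s`, where `erfcx x = exp (x ^ 2) * erfc x` is the scaled complementary error
function. -/
noncomputable def scaledErfc (s : ℝ) : ℝ := exp s * erfc √s

@[fun_prop]
lemma continuous_scaledErfc : Continuous scaledErfc :=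
  continuous_exp.mul (continuous_erfc.comp continuous_sqrt)

lemma scaledErfc_pos (s : ℝ) : 0 < scaledErfc s :=
  mul_pos (exp_pos s) (erfc_pos √s)

lemma scaledErfc_zero : scaledErfc 0 = 1 := by
  simp [scaledErfc, erfc_zero]

lemma scaledErfc_le_two {s : ℝ} (hs : 0 ≤ s) : scaledErfc s ≤ 2 := by
  have hbound := erfc_le_two_mul_exp_neg_sq (sqrt_nonneg s)
  rw [sq_sqrt hs] at hbound
  calc scaledErfc s ≤ exp s * (2 * exp (-s)) :=
        mul_le_mul_of_nonneg_left hbound (exp_pos s).le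
    _ = 2 := by rw [mul_left_comm, ← exp_add, add_neg_cancel, exp_zero, mul_one]

lemma hasDerivAt_scaledErfc {s : ℝ} (hs : 0 < s) :
    HasDerivAt scaledErfc (scaledErfc s - 1 / (√π * √s)) s := by
  have hsqrt := hasDerivAt_sqrt hs.ne'
  refine ((hasDerivAt_exp s).mul ((hasDerivAt_erfc √s).comp s hsqrt)).congr_deriv ?_
  have hexp : exp s * exp (-√s ^ 2) = 1 := by
    rw [sq_sqrt hs.le, ← exp_add, add_neg_cancel, exp_zero]
  have hπ : 0 < √π := sqrt_pos.2 pi_pos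
  have hs' : 0 < √s := sqrt_pos.2 hs
  simp only [Function.comp_apply, scaledErfc]
  field_simp
  linear_combination -hexp

lemma integral_scaledErfc {S : ℝ} (hS : 0 ≤ S) :
    ∫ s in 0..S, scaledErfc s = scaledErfc S - 1 + 2 / √π * √S := by
  have hderiv : ∀ s ∈ Ioo 0 S,
      HasDerivAt (fun s => scaledErfc s + 2 / √π * √s) (scaledErfc s) s := by
    intro s hs
    have hπ : 0 < √π := sqrt_pos.2 pi_pos
    have hs' : 0 < √s := sqrt_pos.2 hs.1
    refine ((hasDerivAt_scaledErfc hs.1).add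
      ((hasDerivAt_sqrt hs.1.ne').const_mul (2 / √π))).congr_deriv ?_
    field_simp
    ring
  rw [integral_eq_sub_of_hasDeriv_right_of_le hS (by fun_prop)
    (fun s hs => (hderiv s hs).hasDerivWithinAt) (continuous_scaledErfc.intervalIntegrable _ _)]
  simp only [scaledErfc_zero, sqrt_zero, mul_zero, add_zero]
  ring

lemma tendsto_integral_scaledErfc_div_sqrt :
    Tendsto (fun S => (∫ s in 0..S, scaledErfc s) / √S) atTop (𝓝 (2 / √π)) := by
  have hbounded : Tendsto (fun S => (scaledErfc S - 1) / √S) atTop (𝓝 0) := by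
    refine squeeze_zero_norm' ?_ (tendsto_inv_atTop_zero.comp tendsto_sqrt_atTop)
    filter_upwards [eventually_ge_atTop 0] with S hS
    have hdev : |scaledErfc S - 1| ≤ 1 :=
      abs_le.2 ⟨by linarith [scaledErfc_pos S], by linarith [scaledErfc_le_two hS]⟩
    rw [norm_div, Real.norm_eq_abs, norm_of_nonneg (sqrt_nonneg S), Function.comp_apply,
      ← one_div]
    gcongr
  have hsum := hbounded.add_const (2 / √π)
  rw [zero_add] at hsum
  refine hsum.congr' ?_
  filter_upwards [eventually_gt_atTop 0] with S hS
  have hS' : 0 < √S := sqrt_pos.2 hS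
  rw [integral_scaledErfc hS.le]
  field_simp

lemma strictMono_integral_of_pos {f : ℝ → ℝ} (hf : Continuous f) (hpos : ∀ x, 0 < f x) (a : ℝ) :
    StrictMono (fun T => ∫ t in a..T, f t) :=
  strictMono_of_hasDerivAt_pos (fun T => (hf.integral_hasStrictDerivAt a T).hasDerivAt) hpos

theorem stmt14 (c κ : ℝ) (hc : 0 < c) (hκ : 0 < κ)
    (K : ℝ → ℝ)
    (hK : ∀ t, K t = c⁻¹ * Real.exp (κ * t / c ^ 2) * erfc (Real.sqrt (κ * t / c ^ 2)))
    (h : ℝ → ℝ) (hh : ∀ T, h T = ∫ t in (0 : ℝ)..T, K t) :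
    StrictMonoOn h (Set.Ici 0)
      ∧ Filter.Tendsto (fun T => h T / Real.sqrt T) Filter.atTop
          (nhds (2 / Real.sqrt (Real.pi * κ))) := by
  set a := κ / c ^ 2
  have ha : 0 < a := by positivity
  have hKa : K = fun t => c⁻¹ * scaledErfc (a * t) := by
    ext t
    rw [hK, scaledErfc, mul_assoc, mul_div_right_comm]
  have hrescale : ∀ T, h T / √T = (√κ)⁻¹ * ((∫ s in 0..a * T, scaledErfc s) / √(a * T)) := by
    intro T
    have hsa : √a = √κ / c := by rw [sqrt_div hκ.le, sqrt_sq hc.le]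
    have hκ' : 0 < √κ := sqrt_pos.2 hκ
    rw [hh, hKa, intervalIntegral.integral_const_mul, integral_comp_mul_left _ ha.ne',
      mul_zero, smul_eq_mul, sqrt_mul ha.le, hsa]
    have hca : c ^ 2 * a = κ := mul_div_cancel₀ κ (pow_pos hc 2).ne'
    field_simp
    rw [sq_sqrt hκ.le, hca]
    ring
  refine ⟨?_, ?_⟩
  · rw [show h = fun T => ∫ t in (0 : ℝ)..T, K t from funext hh, hKa]
    exact (strictMono_integral_of_pos (by fun_prop)
      (fun t => mul_pos (inv_pos.2 hc) (scaledErfc_pos _)) 0).strictMonoOn _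
  · have hlimit : 2 / √(π * κ) = (√κ)⁻¹ * (2 / √π) := by
      rw [sqrt_mul pi_pos.le]
      ring
    simp_rw [hrescale, hlimit]
    exact (tendsto_integral_scaledErfc_div_sqrt.comp
      (tendsto_id.const_mul_atTop ha)).const_mul (√κ)⁻¹
end
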